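/- For every integer ℓ ≥ 2 and every polynomial v of degree at most p with Chebyshev expansion v = Σ_k v_k T_k, the ℓ-th Chebyshev coefficient satisfies |v_ℓ| ≤ (2/(π·ℓ·(ℓ−1))) · ∫_{−1}^{1} |v''(x)|/√(1−x²) dx. -/

import Mathlib

open Polynomial Polynomial.Chebyshev Real intervalIntegral MeasureTheory

private lemma intCos' (r : ℝ) (hr : r ≠ 0) : ∫ θ in (0:ℝ)..π, Real.cos (r*θ) = Real.sin (r*π)/r := by
  have : ∀ θ ∈ Set.uIcc (0:ℝ) π, HasDerivAt (fun t => Real.sin (r*t)/r) (Real.cos (r*θ)) θ := by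
    intro θ _
    have h := ((Real.hasDerivAt_sin (r*θ)).comp θ ((hasDerivAt_id θ).const_mul r)).div_const r
    simpa [mul_comm, mul_div_assoc, mul_div_cancel_left₀ _ hr] using h
  have := intervalIntegral.integral_eq_sub_of_hasDerivAt this
    (by apply Continuous.intervalIntegrable; fun_prop)
  simpa using this

private lemma intCosInt' (m : ℤ) (hm : m ≠ 0) : ∫ θ in (0:ℝ)..π, Real.cos (m*θ) = 0 := by
  rw [intCos' m (by exact_mod_cast hm), Real.sin_int_mul_pi, zero_div]

private lemma orth' (k l : ℕ) (hl : 1 ≤ l) :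
    ∫ θ in (0:ℝ)..π, Real.cos (k*θ) * Real.cos (l*θ) = if k = l then π/2 else 0 := by
  have key : ∀ θ:ℝ, Real.cos (k*θ) * Real.cos (l*θ)
      = (Real.cos ((k-l:ℝ)*θ) + Real.cos ((k+l:ℝ)*θ))/2 := by
    intro θ
    have := Real.two_mul_cos_mul_cos ((k:ℝ)*θ) ((l:ℝ)*θ)
    rw [show ((k:ℝ)*θ - l*θ) = (k-l:ℝ)*θ by ring, show ((k:ℝ)*θ + l*θ) = (k+l:ℝ)*θ by ring] at this
    linarith
  simp_rw [key]
  rw [intervalIntegral.integral_div, intervalIntegral.integral_add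
    (by apply Continuous.intervalIntegrable; fun_prop) (by apply Continuous.intervalIntegrable; fun_prop)]
  have h2 : ∫ θ in (0:ℝ)..π, Real.cos ((k+l:ℝ)*θ) = 0 := by
    have := intCosInt' (k+l) (by omega)
    simpa using this
  by_cases h : k = l
  · subst h
    have h1 : ∫ θ in (0:ℝ)..π, Real.cos ((k-k:ℝ)*θ) = π := by simp
    rw [h1, h2]; simp
  · have h1 : ∫ θ in (0:ℝ)..π, Real.cos ((k-l:ℝ)*θ) = 0 := by
      have := intCosInt' ((k:ℤ)-l) (by omega)
      simpa using this
    rw [h1, h2]; simp [h]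

private lemma stepA' (p ℓ : ℕ) (hℓ : 1 ≤ ℓ) (hlp : ℓ ≤ p) (c : ℕ → ℝ) (v : Polynomial ℝ)
    (hv : v = ∑ k ∈ Finset.range (p + 1), c k • T ℝ k) :
    ∫ θ in (0:ℝ)..π, v.eval (Real.cos θ) * Real.cos (ℓ*θ) = c ℓ * (π/2) := by
  have hev : ∀ θ:ℝ, v.eval (Real.cos θ) = ∑ k ∈ Finset.range (p+1), c k * Real.cos (k*θ) := by
    intro θ
    rw [hv, Polynomial.eval_finset_sum]
    refine Finset.sum_congr rfl fun k _ => ?_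
    rw [Polynomial.eval_smul, smul_eq_mul, T_real_cos]
    norm_num
  simp_rw [hev, Finset.sum_mul, mul_assoc]
  rw [intervalIntegral.integral_finset_sum (fun k _ => by
    apply Continuous.intervalIntegrable; fun_prop)]
  simp_rw [intervalIntegral.integral_const_mul, orth' _ _ hℓ]
  simp_rw [mul_ite, mul_zero]
  rw [Finset.sum_ite_eq' (Finset.range (p+1)) ℓ (fun k => c k * (π/2))]
  simp [Nat.lt_succ_of_le hlp]

private lemma hasDerivComp' (q : Polynomial ℝ) (θ : ℝ) :
    HasDerivAt (fun t => q.eval (Real.cos t)) ((derivative q).eval (Real.cos θ) * (-Real.sin θ)) θ :=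
  (q.hasDerivAt (Real.cos θ)).comp θ (Real.hasDerivAt_cos θ)

private lemma stepB' (q : Polynomial ℝ) (m : ℕ) (hm : 1 ≤ m) :
    ∫ θ in (0:ℝ)..π, q.eval (Real.cos θ) * Real.cos (m*θ)
      = (1/m) * ∫ θ in (0:ℝ)..π, (derivative q).eval (Real.cos θ) * (Real.sin θ * Real.sin (m*θ)) := by
  have hm' : (m:ℝ) ≠ 0 := by positivity
  have hvd : ∀ θ ∈ Set.uIcc (0:ℝ) π, HasDerivAt (fun t => Real.sin (m*t)/m) (Real.cos (m*θ)) θ := by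
    intro θ _
    have h := ((Real.hasDerivAt_sin ((m:ℝ)*θ)).comp θ ((hasDerivAt_id θ).const_mul (m:ℝ))).div_const m
    simpa [mul_comm, mul_div_assoc, mul_div_cancel_left₀ _ hm'] using h
  rw [intervalIntegral.integral_mul_deriv_eq_deriv_mul
    (fun θ _ => hasDerivComp' q θ) hvd
    (by apply Continuous.intervalIntegrable; fun_prop)
    (by apply Continuous.intervalIntegrable; fun_prop)]
  rw [show Real.sin ((m:ℝ)*π)/m = 0 by rw [show ((m:ℝ)*π) = (m:ℤ)*π by push_cast; ring, Real.sin_int_mul_pi, zero_div]]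
  rw [show Real.sin ((m:ℝ)*0)/m = 0 by simp]
  rw [← intervalIntegral.integral_const_mul]
  simp only [mul_zero, zero_sub, zero_mul, sub_zero]
  rw [← intervalIntegral.integral_neg]
  apply intervalIntegral.integral_congr
  intro θ _
  field_simp

private noncomputable def Sfun (l : ℕ) (θ : ℝ) : ℝ :=
  (Real.sin ((l-1:ℝ)*θ)/((l:ℝ)-1) - Real.sin ((l+1:ℝ)*θ)/((l:ℝ)+1))/2

private lemma Sfun_hasDeriv (l : ℕ) (hl : 2 ≤ l) (θ : ℝ) :
    HasDerivAt (Sfun l) (Real.sin θ * Real.sin (l*θ)) θ := by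
  have hl' : (2:ℝ) ≤ l := by exact_mod_cast hl
  have ha : ((l:ℝ)-1) ≠ 0 := by linarith
  have hb : ((l:ℝ)+1) ≠ 0 := by positivity
  have h1 := ((Real.hasDerivAt_sin (((l:ℝ)-1)*θ)).comp θ ((hasDerivAt_id θ).const_mul ((l:ℝ)-1))).div_const ((l:ℝ)-1)
  have h2 := ((Real.hasDerivAt_sin (((l:ℝ)+1)*θ)).comp θ ((hasDerivAt_id θ).const_mul ((l:ℝ)+1))).div_const ((l:ℝ)+1)
  have h := (h1.sub h2).div_const 2
  have key : (Real.cos (((l:ℝ)-1)*θ) * (((l:ℝ)-1)*1) / ((l:ℝ)-1) -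
      Real.cos (((l:ℝ)+1)*θ) * (((l:ℝ)+1)*1) / ((l:ℝ)+1))/2 = Real.sin θ * Real.sin ((l:ℝ)*θ) := by
    have h2s := Real.two_mul_sin_mul_sin ((l:ℝ)*θ) θ
    rw [show ((l:ℝ)*θ - θ) = ((l:ℝ)-1)*θ by ring, show ((l:ℝ)*θ + θ) = ((l:ℝ)+1)*θ by ring] at h2s
    field_simp
    ring_nf at h2s ⊢
    nlinarith [h2s]
  rw [← key]
  exact h

private lemma Sfun_zero (l : ℕ) : Sfun l 0 = 0 := by simp [Sfun]

private lemma Sfun_pi (l : ℕ) : Sfun l π = 0 := by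
  unfold Sfun
  rw [show ((l:ℝ)-1)*π = (((l:ℤ)-1 : ℤ) : ℝ)*π by push_cast; ring,
      show ((l:ℝ)+1)*π = (((l:ℤ)+1 : ℤ) : ℝ)*π by push_cast; ring,
      Real.sin_int_mul_pi, Real.sin_int_mul_pi]
  simp

private lemma Sfun_bound (l : ℕ) (hl : 2 ≤ l) (θ : ℝ) : |Sfun l θ| ≤ 1/((l:ℝ)-1) := by
  have hl' : (2:ℝ) ≤ l := by exact_mod_cast hl
  have ha : (0:ℝ) < (l:ℝ)-1 := by linarith
  have hb : (0:ℝ) < (l:ℝ)+1 := by linarith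
  have e1 : |Real.sin (((l:ℝ)-1)*θ)/((l:ℝ)-1)| ≤ 1/((l:ℝ)-1) := by
    rw [abs_div, abs_of_pos ha]
    gcongr
    exact Real.abs_sin_le_one _
  have e2 : |Real.sin (((l:ℝ)+1)*θ)/((l:ℝ)+1)| ≤ 1/((l:ℝ)-1) := by
    rw [abs_div, abs_of_pos hb]
    gcongr
    · exact Real.abs_sin_le_one _
    · linarith
  have tri : |Real.sin (((l:ℝ)-1)*θ)/((l:ℝ)-1) - Real.sin (((l:ℝ)+1)*θ)/((l:ℝ)+1)|
      ≤ |Real.sin (((l:ℝ)-1)*θ)/((l:ℝ)-1)| + |Real.sin (((l:ℝ)+1)*θ)/((l:ℝ)+1)| := by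
    rw [sub_eq_add_neg]
    refine (abs_add_le _ _).trans ?_
    rw [abs_neg]
  unfold Sfun
  rw [abs_div, abs_of_pos (by norm_num : (0:ℝ) < 2)]
  linarith

private lemma Sfun_cont (l : ℕ) : Continuous (Sfun l) := by unfold Sfun; fun_prop

private lemma stepC' (w : Polynomial ℝ) (l : ℕ) (hl : 2 ≤ l) :
    ∫ θ in (0:ℝ)..π, w.eval (Real.cos θ) * (Real.sin θ * Real.sin (l*θ))
      = ∫ θ in (0:ℝ)..π, (derivative w).eval (Real.cos θ) * (Real.sin θ * Sfun l θ) := by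
  rw [intervalIntegral.integral_mul_deriv_eq_deriv_mul
    (fun θ _ => hasDerivComp' w θ) (fun θ _ => Sfun_hasDeriv l hl θ)
    (by apply Continuous.intervalIntegrable; fun_prop)
    (by apply Continuous.intervalIntegrable; fun_prop)]
  rw [Sfun_pi l, Sfun_zero l]
  simp only [mul_zero, zero_sub, sub_zero, zero_mul]
  rw [← intervalIntegral.integral_neg]
  apply intervalIntegral.integral_congr
  intro θ _
  ring

private lemma stepD' (U : Polynomial ℝ) (l : ℕ) (hl : 2 ≤ l) :
    |∫ θ in (0:ℝ)..π, U.eval (Real.cos θ) * (Real.sin θ * Sfun l θ)|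
      ≤ (1/((l:ℝ)-1)) * ∫ θ in (0:ℝ)..π, |U.eval (Real.cos θ)| * Real.sin θ := by
  have hl' : (2:ℝ) ≤ l := by exact_mod_cast hl
  refine (intervalIntegral.abs_integral_le_integral_abs Real.pi_pos.le).trans ?_
  rw [← intervalIntegral.integral_const_mul]
  apply intervalIntegral.integral_mono_on Real.pi_pos.le
  · apply Continuous.intervalIntegrable
    exact (((U.continuous_aeval.comp Real.continuous_cos).mul (Real.continuous_sin.mul (Sfun_cont l)))).abs
  · apply Continuous.intervalIntegrable; fun_prop
  · intro θ hθ
    have hs : 0 ≤ Real.sin θ := Real.sin_nonneg_of_nonneg_of_le_pi hθ.1 hθ.2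
    rw [abs_mul, abs_mul, abs_of_nonneg hs]
    have h1 : |U.eval (Real.cos θ)| * (Real.sin θ * |Sfun l θ|)
        ≤ |U.eval (Real.cos θ)| * (Real.sin θ * (1/((l:ℝ)-1))) :=
      mul_le_mul_of_nonneg_left (mul_le_mul_of_nonneg_left (Sfun_bound l hl θ) hs) (abs_nonneg _)
    calc |U.eval (Real.cos θ)| * (Real.sin θ * |Sfun l θ|)
        ≤ |U.eval (Real.cos θ)| * (Real.sin θ * (1/((l:ℝ)-1))) := h1
      _ = 1/((l:ℝ)-1) * (|U.eval (Real.cos θ)| * Real.sin θ) := by ring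

private lemma cos_image' : Real.cos '' Set.Ioo 0 π = Set.Ioo (-1) 1 := by
  ext y
  constructor
  · rintro ⟨θ, hθ, rfl⟩
    refine ⟨?_, ?_⟩
    · have := Real.cos_lt_cos_of_nonneg_of_le_pi hθ.1.le le_rfl hθ.2
      rwa [Real.cos_pi] at this
    · have := Real.cos_lt_cos_of_nonneg_of_le_pi le_rfl hθ.2.le hθ.1
      rwa [Real.cos_zero] at this
  · rintro ⟨h1, h2⟩
    refine ⟨Real.arccos y, ⟨Real.arccos_pos.2 h2, ?_⟩, Real.cos_arccos h1.le h2.le⟩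
    rw [Real.arccos, sub_lt_iff_lt_add]
    have := Real.neg_pi_div_two_lt_arcsin.2 h1
    linarith

private lemma stepE' (U : Polynomial ℝ) :
    ∫ x in (-1:ℝ)..1, |U.eval x| / Real.sqrt (1-x^2)
      = ∫ θ in (0:ℝ)..π, |U.eval (Real.cos θ)| := by
  have himg := MeasureTheory.integral_image_eq_integral_abs_deriv_smul (f := Real.cos)
    (f' := fun θ => -Real.sin θ) measurableSet_Ioo
    (fun θ _ => (Real.hasDerivAt_cos θ).hasDerivWithinAt)
    (Real.injOn_cos.mono Set.Ioo_subset_Icc_self)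
    (fun x => |U.eval x| / Real.sqrt (1-x^2))
  rw [cos_image'] at himg
  rw [intervalIntegral.integral_of_le (by norm_num : (-1:ℝ) ≤ 1),
      MeasureTheory.integral_Ioc_eq_integral_Ioo, himg,
      intervalIntegral.integral_of_le Real.pi_pos.le,
      MeasureTheory.integral_Ioc_eq_integral_Ioo]
  apply MeasureTheory.setIntegral_congr_fun measurableSet_Ioo
  intro θ hθ
  have hs : 0 < Real.sin θ := Real.sin_pos_of_pos_of_lt_pi hθ.1 hθ.2
  have hsq : Real.sqrt (1 - Real.cos θ^2) = Real.sin θ := by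
    rw [show 1 - Real.cos θ^2 = Real.sin θ^2 from (Real.sin_sq θ).symm]
    exact Real.sqrt_sq hs.le
  simp only [smul_eq_mul, abs_neg, abs_of_pos hs, hsq]
  field_simp

private lemma sinle' (U : Polynomial ℝ) :
    ∫ θ in (0:ℝ)..π, |U.eval (Real.cos θ)| * Real.sin θ
      ≤ ∫ θ in (0:ℝ)..π, |U.eval (Real.cos θ)| := by
  apply intervalIntegral.integral_mono_on Real.pi_pos.le
  · apply Continuous.intervalIntegrable; fun_prop
  · apply Continuous.intervalIntegrable; fun_prop
  · intro θ hθ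
    have h1 : Real.sin θ ≤ 1 := Real.sin_le_one θ
    nlinarith [abs_nonneg (U.eval (Real.cos θ)), Real.sin_nonneg_of_nonneg_of_le_pi hθ.1 hθ.2]

theorem cheb_single_coeff_bound (p : ℕ) (ℓ : ℕ) (hℓ : 2 ≤ ℓ) (v : Polynomial ℝ)
    (hdeg : v.natDegree ≤ p)
    (c : ℕ → ℝ) (hc0 : ∀ k, p < k → c k = 0)
    (hv : v = ∑ k ∈ Finset.range (p + 1), c k • T ℝ k) :
    |c ℓ| ≤ (2 / (Real.pi * ℓ * (ℓ - 1))) *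
      ∫ x in (-1 : ℝ)..1,
        |(Polynomial.derivative (Polynomial.derivative v)).eval x| / Real.sqrt (1 - x ^ 2) := by
  have hl' : (2:ℝ) ≤ ℓ := by exact_mod_cast hℓ
  have hπ := Real.pi_pos
  set U := Polynomial.derivative (Polynomial.derivative v) with hU
  have hInt : ∫ x in (-1:ℝ)..1, |U.eval x| / Real.sqrt (1 - x^2)
      = ∫ θ in (0:ℝ)..π, |U.eval (Real.cos θ)| := stepE' U
  have hIpos : 0 ≤ ∫ θ in (0:ℝ)..π, |U.eval (Real.cos θ)| :=
    intervalIntegral.integral_nonneg hπ.le (fun θ _ => abs_nonneg _)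
  have hcoef : 0 < 2 / (Real.pi * ℓ * ((ℓ:ℝ) - 1)) := by
    apply div_pos (by norm_num)
    have : (0:ℝ) < (ℓ:ℝ) - 1 := by linarith
    positivity
  rcases le_or_gt ℓ p with hlp | hlp
  · -- main case
    have hA := stepA' p ℓ (by omega) hlp c v hv
    have hB := stepB' v ℓ (by omega)
    have hC := stepC' (derivative v) ℓ hℓ
    have hD := stepD' U ℓ hℓ
    have hc1 : c ℓ * (π/2) = (1/(ℓ:ℝ)) * ∫ θ in (0:ℝ)..π,
        U.eval (Real.cos θ) * (Real.sin θ * Sfun ℓ θ) := by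
      rw [← hA, hB, hC]
    have hc : c ℓ = (2/π) * (1/ℓ) * ∫ θ in (0:ℝ)..π,
        U.eval (Real.cos θ) * (Real.sin θ * Sfun ℓ θ) := by
      have hπ' : π ≠ 0 := hπ.ne'
      field_simp at hc1 ⊢
      linarith
    rw [hc, hInt]
    rw [abs_mul]
    have habs : |(2/π) * (1/(ℓ:ℝ))| = (2/π) * (1/ℓ) := by
      rw [abs_of_pos]
      positivity
    rw [habs]
    calc (2/π) * (1/(ℓ:ℝ)) * |∫ θ in (0:ℝ)..π, U.eval (Real.cos θ) * (Real.sin θ * Sfun ℓ θ)|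
        ≤ (2/π) * (1/(ℓ:ℝ)) * ((1/((ℓ:ℝ)-1)) * ∫ θ in (0:ℝ)..π, |U.eval (Real.cos θ)| * Real.sin θ) := by
          apply mul_le_mul_of_nonneg_left hD
          positivity
      _ ≤ (2/π) * (1/(ℓ:ℝ)) * ((1/((ℓ:ℝ)-1)) * ∫ θ in (0:ℝ)..π, |U.eval (Real.cos θ)|) := by
          apply mul_le_mul_of_nonneg_left _ (by positivity)
          apply mul_le_mul_of_nonneg_left (sinle' U)
          have : (0:ℝ) < (ℓ:ℝ) - 1 := by linarith
          positivity
      _ = (2 / (Real.pi * ℓ * ((ℓ:ℝ) - 1))) * ∫ θ in (0:ℝ)..π, |U.eval (Real.cos θ)| := by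
          have h1 : ((ℓ:ℝ)) ≠ 0 := by linarith
          have h2 : ((ℓ:ℝ)-1) ≠ 0 := by linarith
          field_simp
  · -- trivial case
    rw [hc0 ℓ hlp, abs_zero, hInt]
    exact mul_nonneg hcoef.le hIpos
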